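/- Let p₃ > 0 satisfy p₃ = 2 tanh p₃, and define W₃²(p) = (9 sinh p − 12 p cosh p + sinh(3p))/(24 (p cosh p − sinh p)^{3/2}) for p > 0. Then W₃²(p₃) = (sinh² p₃ − 3)/(6√(sinh p₃)) and W₃²(p₃) > 1/√π. -/

import Mathlib

/-!
At a root, `p cosh p = 2 sinh p`, so `p cosh p - sinh p = sinh p` and, with
`sinh 3p = 4 sinh³ p + 3 sinh p`, the formula for `W₃²` collapses to `(s² - 3)/(6√s)`, where
`s = sinh p₃`. This is at least `1/√3 > 1/√π` as soon as `s ≥ 3`. The function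
`2 sinh p - p cosh p` vanishes at `0`, is concave on `[0, ∞)` (its second derivative is
`-p cosh p`) and is positive at `1.85`, so its positive zero `p₃` exceeds `1.85`, where already
`sinh > 3`.
-/

open Real Set Filter Topology

noncomputable def W32 (p : ℝ) : ℝ :=
  (9 * Real.sinh p - 12 * p * Real.cosh p + Real.sinh (3 * p)) /
    (24 * (p * Real.cosh p - Real.sinh p) ^ ((3:ℝ)/2))

lemma ConcaveOn.lt_of_map_eq_zero {f : ℝ → ℝ} (hf : ConcaveOn ℝ (Ici 0) f) (h0 : 0 ≤ f 0)
    {a x : ℝ} (ha : 0 < f a) (hx : 0 < x) (hfx : f x = 0) : a < x := by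
  by_contra! hxa
  have ha₀ : 0 < a := hx.trans_le hxa
  have hseg := hf.2 (mem_Ici.2 le_rfl) ha₀.le (sub_nonneg.2 ((div_le_one ha₀).2 hxa))
    (div_pos hx ha₀).le (sub_add_cancel 1 (x / a))
  simp only [smul_eq_mul, mul_zero, zero_add, div_mul_cancel₀ x ha₀.ne', hfx] at hseg
  linarith [mul_pos (div_pos hx ha₀) ha, mul_nonneg (sub_nonneg.2 ((div_le_one ha₀).2 hxa)) h0]

lemma concaveOn_two_mul_sinh_sub_mul_cosh :
    ConcaveOn ℝ (Ici 0) (fun p ↦ 2 * sinh p - p * cosh p) := by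
  refine concaveOn_of_hasDerivWithinAt2_nonpos (convex_Ici 0) (f' := fun p ↦ cosh p - p * sinh p)
    (f'' := fun p ↦ -(p * cosh p)) (by fun_prop) (fun p _ ↦ ?_) (fun p _ ↦ ?_) (fun p hp ↦ ?_)
  · exact ((((hasDerivAt_sinh p).const_mul 2).fun_sub
      ((hasDerivAt_id' p).fun_mul (hasDerivAt_cosh p))).congr_deriv (by ring)).hasDerivWithinAt
  · exact (((hasDerivAt_cosh p).fun_sub
      ((hasDerivAt_id' p).fun_mul (hasDerivAt_sinh p))).congr_deriv (by ring)).hasDerivWithinAt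
  · rw [interior_Ici, mem_Ioi] at hp
    exact neg_nonpos.2 (mul_nonneg hp.le (cosh_pos p).le)

lemma exp_one_point_eight_five_gt : 6.28 < exp 1.85 := by
  have he2 : 7.389 < exp 2 := by
    rw [show (2 : ℝ) = 1 + 1 by norm_num, exp_add]
    nlinarith [exp_one_gt_d9]
  have hsmall : 0.85 ≤ exp (-0.15) := by linarith [add_one_le_exp (-0.15 : ℝ)]
  rw [show (1.85 : ℝ) = 2 + -0.15 by norm_num, exp_add]
  nlinarith [exp_pos (-0.15 : ℝ)]

lemma exp_neg_one_point_eight_five_lt : exp (-1.85) < 0.16 := by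
  rw [exp_neg, inv_lt_comm₀ (exp_pos _) (by norm_num)]
  linarith [exp_one_point_eight_five_gt]

lemma three_lt_sinh_one_point_eight_five : 3 < sinh 1.85 := by
  rw [sinh_eq]
  linarith [exp_one_point_eight_five_gt, exp_neg_one_point_eight_five_lt]

lemma two_mul_sinh_sub_mul_cosh_one_point_eight_five_pos :
    0 < 2 * sinh 1.85 - 1.85 * cosh 1.85 := by
  rw [sinh_eq, cosh_eq]
  have hprod : exp 1.85 * exp (-1.85) = 1 := by rw [← exp_add]; norm_num
  nlinarith [exp_one_point_eight_five_gt, exp_pos (-1.85 : ℝ)]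

lemma mul_cosh_eq_two_mul_sinh_of_eq_two_mul_tanh {p : ℝ} (h : p = 2 * tanh p) :
    p * cosh p = 2 * sinh p := by
  calc p * cosh p = 2 * tanh p * cosh p := by rw [← h]
    _ = 2 * sinh p := by rw [tanh_eq_sinh_div_cosh, mul_assoc, div_mul_cancel₀ _ (cosh_pos p).ne']

lemma W32_eq_of_mul_cosh_eq_two_mul_sinh {p : ℝ} (hp : 0 < p) (h : p * cosh p = 2 * sinh p) :
    W32 p = (sinh p ^ 2 - 3) / (6 * √(sinh p)) := by
  have hs : 0 < sinh p := sinh_pos_iff.2 hp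
  have hpow : sinh p ^ ((3 : ℝ) / 2) = sinh p * √(sinh p) := by
    rw [show (3 : ℝ) / 2 = 1 + 1 / 2 by norm_num, rpow_add hs, rpow_one, sqrt_eq_rpow]
  have hnum : 9 * sinh p - 12 * p * cosh p + sinh (3 * p) = 4 * sinh p * (sinh p ^ 2 - 3) := by
    rw [sinh_three_mul, mul_assoc 12, h]; ring
  rw [W32, hnum, show p * cosh p - sinh p = sinh p by linarith, hpow,
    show 24 * (sinh p * √(sinh p)) = 4 * sinh p * (6 * √(sinh p)) by ring,
    mul_div_mul_left _ _ (by positivity)]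

lemma inv_sqrt_pi_lt_of_three_le {s : ℝ} (hs : 3 ≤ s) : 1 / √π < (s ^ 2 - 3) / (6 * √s) := by
  have hs3 : 0 < s ^ 2 - 3 := by nlinarith
  -- `(s² - 3)² - 12 s = (s - 3)(s³ + 3s² + 3s - 3)`, with equality `1/√3` at `s = 3`
  have hsq : 6 * √s ≤ √3 * (s ^ 2 - 3) := by
    rw [show 6 * √s = √(36 * s) by rw [sqrt_mul (by norm_num), show (36 : ℝ) = 6 ^ 2 by norm_num,
      sqrt_sq (by norm_num)], ← sqrt_sq hs3.le, ← sqrt_mul (by norm_num)]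
    exact sqrt_le_sqrt (by nlinarith [mul_nonneg (sub_nonneg.2 hs) (sq_nonneg s)])
  have hpi : √3 < √π := sqrt_lt_sqrt (by norm_num) pi_gt_three
  rw [div_lt_div_iff₀ (sqrt_pos.2 pi_pos) (by positivity)]
  nlinarith

/-- If `p₃ > 0` satisfies `p₃ = 2 tanh p₃`, then
`W₃²(p₃) = (sinh² p₃ − 3)/(6√(sinh p₃))` and `W₃²(p₃) > 1/√π`. -/
theorem W32_at_root (p₃ : ℝ) (hp : 0 < p₃) (hroot : p₃ = 2 * Real.tanh p₃) :
    W32 p₃ = (Real.sinh p₃ ^ 2 - 3) / (6 * Real.sqrt (Real.sinh p₃)) ∧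
    1 / Real.sqrt π < W32 p₃ := by
  have hcosh := mul_cosh_eq_two_mul_sinh_of_eq_two_mul_tanh hroot
  have hW := W32_eq_of_mul_cosh_eq_two_mul_sinh hp hcosh
  have hp₃ : 1.85 < p₃ :=
    concaveOn_two_mul_sinh_sub_mul_cosh.lt_of_map_eq_zero (by simp)
      two_mul_sinh_sub_mul_cosh_one_point_eight_five_pos hp (by linarith)
  have hsinh : 3 < sinh p₃ := three_lt_sinh_one_point_eight_five.trans (sinh_lt_sinh.2 hp₃)
  exact ⟨hW, hW ▸ inv_sqrt_pi_lt_of_three_le hsinh.le⟩
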